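/- arXiv:math/0607396 — 3 statements merged into one kernel-verified Lean document; each statement's English description precedes it below -/
import Mathlib

section
/- In a d-braxtope Q^{d,n} with vertex array x_0 < x_1 < ... < x_n (n ≥ d ≥ 3), for every u with 1 ≤ u ≤ n, the segment [x_0, x_u] is an edge of Q. -/
open Set

noncomputable section

variable {V : Type*} [NormedAddCommGroup V] [NormedSpace ℝ V]

open Classical in
/-- Affine dimension of a set: `-1` for the empty set, otherwise the
dimension of its affine hull. -/
def sdim (s : Set V) : ℤ :=
  if s.Nonempty then (Module.finrank ℝ (affineSpan ℝ s).direction : ℤ) else -1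

/-- `F` is a face of the polytope `Q`. -/
def IsFaceOf (Q F : Set V) : Prop :=
  IsExtreme ℝ Q F ∧ Convex ℝ F ∧ IsClosed F

/-- `F` is a facet of the `d`-polytope `Q`. -/
def IsFacetOf (d : ℕ) (Q F : Set V) : Prop :=
  IsFaceOf Q F ∧ sdim F = (d : ℤ) - 1

/-- The segment `[a, b]` is an edge (a 1-dimensional face) of `Q`. -/
def IsEdgeOf (Q : Set V) (a b : V) : Prop :=
  IsFaceOf Q (segment ℝ a b) ∧ sdim (segment ℝ a b) = 1

/-- Clamped vertex indexing: `x_t = x_0` for `t ≤ 0` and `x_t = x_n` for `t ≥ n`. -/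
def xc {n : ℕ} (x : Fin (n + 1) → V) (t : ℤ) : V :=
  x ⟨(min (max t 0) n).toNat, by omega⟩

/-- The polytope spanned by the vertex array `x`. -/
def braxQ {n : ℕ} (x : Fin (n + 1) → V) : Set V :=
  convexHull ℝ (Set.range x)

/-- Vertex set of the simplex facet `T_i = [x_i, …, x_{i+d-1}]`. -/
def Tset (d : ℕ) {n : ℕ} (x : Fin (n + 1) → V) (i : ℤ) : Set V :=
  xc x '' Set.Icc i (i + (d : ℤ) - 1)

/-- Vertex set of the facet
`E_j = [x_0, x_{j-(d-2)}, …, x_{j-1}, x_{j+1}, …, x_{j+(d-2)}]`. -/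
def Eset (d : ℕ) {n : ℕ} (x : Fin (n + 1) → V) (j : ℤ) : Set V :=
  insert (x 0) (xc x '' (Set.Icc (j - ((d : ℤ) - 2)) (j + ((d : ℤ) - 2)) \ {j}))

/-- `x_0 < x_1 < ⋯ < x_n` is the vertex array of a `d`-braxtope: for `d ≤ 2` a
`d`-simplex; for `d ≥ 3` a `d`-polytope whose facets are exactly the `T_i`
(`0 ≤ i ≤ n - d + 1`) and the `E_j` (`2 ≤ j ≤ n`). -/
def IsBraxtope (d n : ℕ) (x : Fin (n + 1) → V) : Prop :=
  (d ≤ 2 → n = d ∧ AffineIndependent ℝ x) ∧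
  (3 ≤ d →
    d ≤ n ∧ Function.Injective x ∧
    sdim (braxQ x) = d ∧
    (∀ i, x i ∈ Set.extremePoints ℝ (braxQ x)) ∧
    (∀ F : Set V, IsFacetOf d (braxQ x) F ↔
      (∃ i : ℤ, 0 ≤ i ∧ i ≤ (n : ℤ) - d + 1 ∧ F = convexHull ℝ (Tset d x i)) ∨
      (∃ j : ℤ, 2 ≤ j ∧ j ≤ (n : ℤ) ∧ F = convexHull ℝ (Eset d x j))))


private lemma brax_arith (d n u tv : ℤ) (hd : 3 ≤ d) (hn : d ≤ n) (hu1 : 1 ≤ u)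
    (hun : u ≤ n) (ht0 : 0 ≤ tv) (htn : tv ≤ n)
    (key : ∀ j : ℤ, max 2 (u - d + 2) ≤ j → j ≤ min n (u + d - 2) →
      (j ≠ u ∨ u = n) →
      (tv = 0 ∨ (tv = n ∧ n - d + 2 ≤ j) ∨
        (j - d + 2 ≤ tv ∧ tv ≤ j + d - 2 ∧ tv ≠ j)))
    (hkT : u + 1 ≤ d → tv ≤ d - 1) : tv = 0 ∨ tv = u := by
  have hk1 := key (max 2 (u - d + 2))
  have hk2 := key (max 2 (u - d + 2) + 1)
  have hk3 := key (min n (u + d - 2) - 1)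
  have hk4 := key (min n (u + d - 2))
  have hk5 := key tv
  omega

/-- In a `d`-braxtope, `[x_0, x_u]` is an edge for every `1 ≤ u ≤ n`. -/
theorem braxtope_edges_on_x0 (d n : ℕ) (hd : 3 ≤ d) (hn : d ≤ n)
    (x : Fin (n + 1) → V) (hx : IsBraxtope d n x)
    (u : Fin (n + 1)) (hu : 1 ≤ (u : ℕ)) :
    IsEdgeOf (braxQ x) (x 0) (x u) := by
  classical
  obtain ⟨-, h3⟩ := hx
  obtain ⟨hdn, hinj, -, hext, hfac⟩ := h3 hd
  have hun : (u : ℕ) ≤ n := by omega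
  set u' : ℤ := ((u : ℕ) : ℤ) with hu'def
  set a : ℤ := max 2 (u' - d + 2) with hadef
  set b : ℤ := min (n : ℤ) (u' + d - 2) with hbdef
  set J : Set ℤ := {j | a ≤ j ∧ j ≤ b ∧ (j ≠ u' ∨ u' = (n : ℤ))} with hJdef
  -- J is nonempty (b ∈ J)
  have hbJ : b ∈ J := by
    refine ⟨by omega, le_rfl, ?_⟩
    by_cases h : u' = (n : ℤ)
    · exact Or.inr h
    · exact Or.inl (by omega)
  haveI : Nonempty J := Set.Nonempty.to_subtype ⟨b, hbJ⟩
  set T0 : Set V := if (u : ℕ) + 1 ≤ d then convexHull ℝ (Tset d x 0) else braxQ x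
    with hT0def
  set F : Set V := (⋂ j : J, convexHull ℝ (Eset d x (j : ℤ))) ∩ T0 with hFdef
  -- basic subsets
  have hEsub : ∀ j : ℤ, Eset d x j ⊆ Set.range x := by
    rintro j y (rfl | ⟨t, -, rfl⟩)
    · exact ⟨0, rfl⟩
    · exact ⟨_, rfl⟩
  have hTsub : ∀ i : ℤ, Tset d x i ⊆ Set.range x := by
    rintro i y ⟨t, -, rfl⟩; exact ⟨_, rfl⟩
  have hQcomp : IsCompact (braxQ x) := (Set.finite_range x).isCompact_convexHull (𝕜 := ℝ)
  have hEfin : ∀ j : ℤ, (Eset d x j).Finite :=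
    fun j => (Set.finite_range x).subset (hEsub j)
  have hTfin : ∀ i : ℤ, (Tset d x i).Finite :=
    fun i => (Set.finite_range x).subset (hTsub i)
  -- faces
  have hEface : ∀ j : ℤ, 2 ≤ j → j ≤ (n : ℤ) →
      IsFaceOf (braxQ x) (convexHull ℝ (Eset d x j)) := fun j h1 h2 =>
    ((hfac _).mpr (Or.inr ⟨j, h1, h2, rfl⟩)).1
  have hT0face : IsFaceOf (braxQ x) T0 := by
    rw [hT0def]
    split_ifs
    · exact ((hfac _).mpr (Or.inl ⟨0, le_rfl, by omega, rfl⟩)).1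
    · exact ⟨IsExtreme.rfl, convex_convexHull _ _, hQcomp.isClosed⟩
  have hJrange : ∀ j : ℤ, j ∈ J → 2 ≤ j ∧ j ≤ (n : ℤ) := by
    intro j hj
    obtain ⟨h1, h2, -⟩ := hj
    constructor <;> omega
  -- F is a face of Q
  have hFext : IsExtreme ℝ (braxQ x) F := by
    refine IsExtreme.inter ?_ hT0face.1
    exact isExtreme_iInter fun j =>
      (hEface _ (hJrange _ j.2).1 (hJrange _ j.2).2).1
  have hFclosed : IsClosed F := by
    refine IsClosed.inter (isClosed_iInter fun j =>
      ((hEfin _).isCompact_convexHull (𝕜 := ℝ)).isClosed) ?_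
    rw [hT0def]; split_ifs
    · exact ((hTfin _).isCompact_convexHull (𝕜 := ℝ)).isClosed
    · exact hQcomp.isClosed
  have hFconv : Convex ℝ F := by
    refine Convex.inter (convex_iInter fun j => convex_convexHull _ _) ?_
    rw [hT0def]; split_ifs
    · exact convex_convexHull _ _
    · exact convex_convexHull _ _
  have hFcomp : IsCompact F := hQcomp.of_isClosed_subset hFclosed hFext.1
  -- x 0 and x u belong to F
  have hxcE : ∀ (t' : ℤ) (t : Fin (n+1)), (Int.toNat (min (max t' 0) (n : ℤ)) = (t : ℕ)) →
      xc x t' = x t := by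
    intro t' t h
    unfold xc
    congr 1
    exact Fin.ext h
  have hx0E : ∀ j : ℤ, x 0 ∈ convexHull ℝ (Eset d x j) :=
    fun j => subset_convexHull _ _ (mem_insert _ _)
  have hxuE : ∀ j ∈ J, x u ∈ convexHull ℝ (Eset d x j) := by
    intro j hj
    obtain ⟨h1, h2, h3⟩ := hj
    apply subset_convexHull
    by_cases hju : j = u'
    · -- then u' = n; use t' = n + 1
      have hun' : u' = (n : ℤ) := h3.resolve_left (not_not_intro hju)
      refine Or.inr ⟨(n : ℤ) + 1, ⟨⟨by omega, by omega⟩,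
        by simp only [Set.mem_singleton_iff]; omega⟩, ?_⟩
      exact hxcE _ _ (by omega)
    · refine Or.inr ⟨u', ⟨⟨by omega, by omega⟩,
        by simp only [Set.mem_singleton_iff]; omega⟩, ?_⟩
      exact hxcE _ _ (by omega)
  have hx0T : x 0 ∈ convexHull ℝ (Tset d x 0) := by
    apply subset_convexHull
    exact ⟨0, ⟨le_rfl, by omega⟩, hxcE _ _ (by
      have h0v : ((0 : Fin (n + 1)) : ℕ) = 0 := rfl
      omega)⟩
  have hxuT : (u : ℕ) + 1 ≤ d → x u ∈ convexHull ℝ (Tset d x 0) := by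
    intro h
    apply subset_convexHull
    exact ⟨u', ⟨by omega, by omega⟩, hxcE _ _ (by omega)⟩
  have hx0F : x 0 ∈ F := by
    refine ⟨Set.mem_iInter.mpr fun j => hx0E _, ?_⟩
    rw [hT0def]; split_ifs
    · exact hx0T
    · exact subset_convexHull _ _ ⟨0, rfl⟩
  have hxuF : x u ∈ F := by
    refine ⟨Set.mem_iInter.mpr fun j => hxuE _ j.2, ?_⟩
    rw [hT0def]; split_ifs with h
    · exact hxuT h
    · exact subset_convexHull _ _ ⟨u, rfl⟩
  -- vertex membership in facets forces index constraints
  have hvertE : ∀ (t : Fin (n+1)) (j : ℤ), x t ∈ convexHull ℝ (Eset d x j) →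
      ((t : ℤ) = 0 ∨ ((t : ℤ) = (n : ℤ) ∧ (n : ℤ) - d + 2 ≤ j) ∨
        (j - d + 2 ≤ (t : ℤ) ∧ (t : ℤ) ≤ j + d - 2 ∧ (t : ℤ) ≠ j)) := by
    intro t j hm
    have hsubQ : convexHull ℝ (Eset d x j) ⊆ braxQ x := convexHull_mono (hEsub j)
    have h1 : x t ∈ Eset d x j :=
      extremePoints_convexHull_subset
        (inter_extremePoints_subset_extremePoints_of_subset hsubQ ⟨hm, hext t⟩)
    rcases h1 with h1 | ⟨t', ⟨⟨hl, hr⟩, hne⟩, heq⟩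
    · left
      have : t = 0 := hinj h1
      simp [this]
    · have hval : (Int.toNat (min (max t' 0) (n : ℤ)) : ℕ) = (t : ℕ) :=
        congrArg Fin.val (hinj heq)
      have hne' : t' ≠ j := by simpa using hne
      omega
  have hvertT : ∀ (t : Fin (n+1)), x t ∈ convexHull ℝ (Tset d x 0) →
      (t : ℤ) ≤ (d : ℤ) - 1 := by
    intro t hm
    have hsubQ : convexHull ℝ (Tset d x 0) ⊆ braxQ x := convexHull_mono (hTsub 0)
    have h1 : x t ∈ Tset d x 0 :=
      extremePoints_convexHull_subset
        (inter_extremePoints_subset_extremePoints_of_subset hsubQ ⟨hm, hext t⟩)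
    obtain ⟨t', ⟨hl, hr⟩, heq⟩ := h1
    have hval : (Int.toNat (min (max t' 0) (n : ℤ)) : ℕ) = (t : ℕ) :=
      congrArg Fin.val (hinj heq)
    omega
  -- extreme points of F
  have hextF : F.extremePoints ℝ ⊆ {x 0, x u} := by
    intro y hy
    have hyQ : y ∈ (braxQ x).extremePoints ℝ :=
      hFext.extremePoints_subset_extremePoints hy
    obtain ⟨t, rfl⟩ := extremePoints_convexHull_subset hyQ
    have hxtF : x t ∈ F := hy.1
    have key : ∀ j : ℤ, a ≤ j → j ≤ b → (j ≠ u' ∨ u' = (n : ℤ)) →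
        ((t : ℤ) = 0 ∨ ((t : ℤ) = (n : ℤ) ∧ (n : ℤ) - d + 2 ≤ j) ∨
          (j - d + 2 ≤ (t : ℤ) ∧ (t : ℤ) ≤ j + d - 2 ∧ (t : ℤ) ≠ j)) := by
      intro j h1 h2 h3
      exact hvertE t j (Set.mem_iInter.mp hxtF.1 ⟨j, h1, h2, h3⟩)
    have hkT : (u : ℕ) + 1 ≤ d → (t : ℤ) ≤ (d : ℤ) - 1 := by
      intro h
      apply hvertT t
      have := hxtF.2
      rwa [hT0def, if_pos h] at this
    have htn : (t : ℕ) < n + 1 := t.isLt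
    have hgoal : ((t : ℕ) : ℤ) = 0 ∨ ((t : ℕ) : ℤ) = u' := by
      refine brax_arith d n u' ((t : ℕ) : ℤ) (by omega) (by omega) (by omega)
        (by omega) (by omega) (by omega) ?_ (fun h => hkT (by omega))
      intro j h1 h2 h3
      exact key j (by omega) (by omega) h3
    rcases hgoal with h | h
    · have : t = 0 := Fin.ext (by
        have h0v : ((0 : Fin (n + 1)) : ℕ) = 0 := rfl
        omega)
      rw [this]
      exact Set.mem_insert _ _
    · have : t = u := Fin.ext (by omega)
      rw [this]
      exact Set.mem_insert_of_mem _ rfl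
  -- F equals the segment
  have hsegsub : segment ℝ (x 0) (x u) ⊆ F :=
    hFconv.segment_subset hx0F hxuF
  have hsegclosed : IsClosed (segment ℝ (x 0) (x u)) := by
    rw [← convexHull_pair]
    exact (((Set.finite_singleton (x u)).insert (x 0)).isCompact_convexHull (𝕜 := ℝ)).isClosed
  have hFsub : F ⊆ segment ℝ (x 0) (x u) := by
    have hKM : closure (convexHull ℝ (F.extremePoints ℝ)) = F :=
      closure_convexHull_extremePoints hFcomp hFconv
    calc F = closure (convexHull ℝ (F.extremePoints ℝ)) := hKM.symm
      _ ⊆ closure (segment ℝ (x 0) (x u)) := by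
          apply closure_mono
          rw [← convexHull_pair]
          exact convexHull_mono hextF
      _ = segment ℝ (x 0) (x u) := hsegclosed.closure_eq
  have hFeq : F = segment ℝ (x 0) (x u) := Subset.antisymm hFsub hsegsub
  -- conclude
  have hne0 : x 0 ≠ x u := by
    intro h
    have : (0 : Fin (n+1)) = u := hinj h
    have : (0 : ℕ) = (u : ℕ) := congrArg Fin.val this
    omega
  constructor
  · exact ⟨hFeq ▸ hFext, convex_segment _ _, hsegclosed⟩
  · have hne : (segment ℝ (x 0) (x u)).Nonempty := ⟨x 0, left_mem_segment _ _ _⟩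
    simp only [sdim, if_pos hne]
    have h1 : affineSpan ℝ (segment ℝ (x 0) (x u)) =
        affineSpan ℝ ({x 0, x u} : Set V) := by
      rw [← convexHull_pair, affineSpan_convexHull]
    rw [h1, direction_affineSpan, vectorSpan_pair]
    have hv : x 0 -ᵥ x u ≠ 0 := by
      rw [vsub_eq_sub, sub_ne_zero]
      exact hne0
    rw [finrank_span_singleton hv]
    norm_num
end
end

section
/- In a d-braxtope Q^{d,n} with vertex array x_0 < x_1 < ... < x_n (n ≥ d ≥ 3), the segment [x_u, x_n] is an edge of Q if and only if u = 0 or n-(d-1) ≤ u ≤ n-1. In particular x_n is a simple vertex of Q (contained in exactly d edges). -/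
open Set

noncomputable section

variable {V : Type*} [NormedAddCommGroup V] [NormedSpace ℝ V]

lemma sdim_convexHull_eq {s : Set V} (hs : s.Nonempty) :
    sdim (convexHull ℝ s) = (Module.finrank ℝ (vectorSpan ℝ s) : ℤ) := by
  rw [sdim, if_pos (hs.mono (subset_convexHull ℝ s)), affineSpan_convexHull,
    direction_affineSpan]

lemma sdim_segment {a b : V} (hab : a ≠ b) : sdim (segment ℝ a b) = 1 := by
  rw [← convexHull_pair, sdim_convexHull_eq ⟨a, by simp⟩, vectorSpan_pair]
  rw [vsub_eq_sub, finrank_span_singleton (sub_ne_zero.2 hab)]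
  norm_num

lemma sdim_singleton (a : V) : sdim ({a} : Set V) = 0 := by
  rw [sdim, if_pos ⟨a, rfl⟩, direction_affineSpan, vectorSpan_singleton]
  simp

lemma mem_extremePoints_of_subset {Q F : Set V} {p : V} (hp : p ∈ Q.extremePoints ℝ)
    (hF : F ⊆ Q) (hpF : p ∈ F) : p ∈ F.extremePoints ℝ :=
  ⟨hpF, fun x₁ h₁ x₂ h₂ hseg => hp.2 (hF h₁) (hF h₂) hseg⟩

lemma IsExtreme.exists_mem_of_convexHull {Q S : Set V} (hS : IsExtreme ℝ Q S) (hQ : Convex ℝ Q)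
    (B : Finset V) (hBQ : ↑B ⊆ Q) {p : V} (hp : p ∈ convexHull ℝ (B : Set V)) (hpS : p ∈ S) :
    ∃ b ∈ B, b ∈ S := by
  classical
  obtain ⟨w, hw0, hw1, hwp⟩ := Finset.mem_convexHull'.1 hp
  obtain ⟨b₀, hb₀B, hb₀⟩ : ∃ b ∈ B, 0 < w b := by
    by_contra h
    push_neg at h
    have : (∑ y ∈ B, w y) ≤ 0 := Finset.sum_nonpos h
    rw [hw1] at this; linarith
  have hr0 : 0 ≤ ∑ y ∈ B.erase b₀, w y :=
    Finset.sum_nonneg fun y hy => hw0 y (Finset.mem_of_mem_erase hy)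
  have hsplit : w b₀ + ∑ y ∈ B.erase b₀, w y = 1 := by
    rw [Finset.add_sum_erase _ _ hb₀B]; exact hw1
  have hvsplit : w b₀ • b₀ + (∑ y ∈ B.erase b₀, w y • y) = p := by
    rw [Finset.add_sum_erase _ (fun y => w y • y) hb₀B]; exact hwp
  rcases eq_or_lt_of_le hr0 with h0 | hpos
  · have hz : ∀ y ∈ B.erase b₀, w y = 0 := fun y hy =>
      (Finset.sum_eq_zero_iff_of_nonneg
        (fun y hy => hw0 y (Finset.mem_of_mem_erase hy))).1 h0.symm y hy
    have hz' : (∑ y ∈ B.erase b₀, w y • y) = 0 :=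
      Finset.sum_eq_zero fun y hy => by rw [hz y hy, zero_smul]
    have hb1 : w b₀ = 1 := by rw [← hsplit, ← h0, add_zero]
    have hpb : p = b₀ := by rw [← hvsplit, hz', add_zero, hb1, one_smul]
    exact ⟨b₀, hb₀B, hpb ▸ hpS⟩
  · set q := (∑ y ∈ B.erase b₀, w y)⁻¹ • (∑ y ∈ B.erase b₀, w y • y) with hq
    have hqQ : q ∈ Q := by
      have hmem : q ∈ convexHull ℝ (B : Set V) := by
        have := Finset.centerMass_mem_convexHull (B.erase b₀)
          (fun y hy => hw0 y (Finset.mem_of_mem_erase hy)) hpos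
          (fun y hy => (Finset.mem_coe.2 (Finset.mem_of_mem_erase hy)))
        simpa [Finset.centerMass, hq] using this
      exact (convexHull_min hBQ hQ) hmem
    have hpseg : p ∈ openSegment ℝ b₀ q := by
      refine ⟨w b₀, ∑ y ∈ B.erase b₀, w y, hb₀, hpos, hsplit, ?_⟩
      rw [hq, smul_inv_smul₀ (ne_of_gt hpos)]; exact hvsplit
    exact ⟨b₀, hb₀B, hS.2 (hBQ hb₀B) hqQ hpS hpseg⟩

lemma AffineIndependent.isExtreme_convexHull_of_subset {s t : Finset V}
    (hs : AffineIndependent ℝ ((↑) : s → V)) (hts : t ⊆ s) :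
    IsExtreme ℝ (convexHull ℝ (s : Set V)) (convexHull ℝ (t : Set V)) := by
  refine ⟨convexHull_mono (by exact_mod_cast hts), ?_⟩
  rintro x₁ hx₁ x₂ hx₂ p hp ⟨a, b, ha, hb, hab, hpeq⟩
  obtain ⟨w₁, hw₁0, hw₁1, hw₁s⟩ := Finset.mem_convexHull'.1 hx₁
  obtain ⟨w₂, hw₂0, hw₂1, hw₂s⟩ := Finset.mem_convexHull'.1 hx₂
  obtain ⟨wt, hwt0, hwt1, hwts⟩ := Finset.mem_convexHull'.1 hp
  classical
  set wp : V → ℝ := fun y => if y ∈ t then wt y else 0 with hwpdef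
  set wc : V → ℝ := fun y => a * w₁ y + b * w₂ y with hwcdef
  have hsum_p : ∑ y ∈ s, wp y = 1 := by
    rw [← Finset.sum_subset hts (fun y _ hyt => if_neg hyt)]
    rw [← hwt1]
    exact Finset.sum_congr rfl fun y hy => if_pos hy
  have hvec_p : ∑ y ∈ s, wp y • y = p := by
    rw [← Finset.sum_subset hts (fun y _ hyt => by
      simp only [hwpdef, if_neg hyt, zero_smul])]
    rw [← hwts]
    exact Finset.sum_congr rfl fun y hy => by simp only [hwpdef, if_pos hy]
  have hsum_c : ∑ y ∈ s, wc y = 1 := by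
    simp only [hwcdef, Finset.sum_add_distrib, ← Finset.mul_sum, hw₁1, hw₂1, mul_one, hab]
  have hvec_c : ∑ y ∈ s, wc y • y = p := by
    simp only [hwcdef, add_smul, mul_smul, Finset.sum_add_distrib, ← Finset.smul_sum,
      hw₁s, hw₂s]
    exact hpeq
  have hkey := hs.eq_of_sum_eq_sum_subtype (w₁ := wc) (w₂ := wp)
      (by rw [hsum_c, hsum_p]) (by rw [hvec_c, hvec_p])
  have hzero : ∀ y ∈ s, y ∉ t → w₁ y = 0 ∧ w₂ y = 0 := by
    intro y hys hyt
    have h1 := hkey y hys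
    simp only [hwcdef, hwpdef, if_neg hyt] at h1
    have hw1 := hw₁0 y hys
    have hw2 := hw₂0 y hys
    constructor <;> nlinarith
  suffices hboth : x₁ ∈ convexHull ℝ (t : Set V) ∧ x₂ ∈ convexHull ℝ (t : Set V) from hboth.1
  constructor
  · refine Finset.mem_convexHull'.2 ⟨w₁, fun y hy => hw₁0 y (hts hy), ?_, ?_⟩
    · rw [Finset.sum_subset hts fun y hys hyt => (hzero y hys hyt).1]; exact hw₁1
    · rw [Finset.sum_subset hts fun y hys hyt => by rw [(hzero y hys hyt).1, zero_smul]]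
      exact hw₁s
  · refine Finset.mem_convexHull'.2 ⟨w₂, fun y hy => hw₂0 y (hts hy), ?_, ?_⟩
    · rw [Finset.sum_subset hts fun y hys hyt => (hzero y hys hyt).2]; exact hw₂1
    · rw [Finset.sum_subset hts fun y hys hyt => by rw [(hzero y hys hyt).2, zero_smul]]
      exact hw₂s

open Classical in
/-- Maximizers of a linear functional over a finite set. -/
def amax (X : Finset V) (g : V →ₗ[ℝ] ℝ) : Finset V :=
  X.filter fun y => ∀ z ∈ X, g z ≤ g y

lemma amax_subset {X : Finset V} {g : V →ₗ[ℝ] ℝ} : amax X g ⊆ X := Finset.filter_subset _ _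

lemma mem_amax {X : Finset V} {g : V →ₗ[ℝ] ℝ} {y : V} :
    y ∈ amax X g ↔ y ∈ X ∧ ∀ z ∈ X, g z ≤ g y := by
  rw [amax]
  exact Finset.mem_filter

lemma amax_val {X : Finset V} {g : V →ₗ[ℝ] ℝ} {y₀ : V} (hy₀ : y₀ ∈ amax X g) :
    ∀ y ∈ amax X g, g y = g y₀ := by
  intro y hy
  exact le_antisymm ((mem_amax.1 hy₀).2 y (amax_subset hy)) ((mem_amax.1 hy).2 y₀ (amax_subset hy₀))

lemma amax_lt {X : Finset V} {g : V →ₗ[ℝ] ℝ} {y₀ : V} (hy₀ : y₀ ∈ amax X g)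
    {z : V} (hz : z ∈ X) (hnz : z ∉ amax X g) : g z < g y₀ := by
  rcases lt_or_ge (g z) (g y₀) with h | h
  · exact h
  · exfalso
    exact hnz (mem_amax.2 ⟨hz, fun z' hz' => ((mem_amax.1 hy₀).2 z' hz').trans h⟩)

lemma convexHull_le_of_max {X : Finset V} {g : V →ₗ[ℝ] ℝ} {M : ℝ} (hM : ∀ z ∈ X, g z ≤ M) :
    ∀ p ∈ convexHull ℝ (X : Set V), g p ≤ M := fun _p hp =>
  convexHull_min (fun z hz => hM z hz) (convex_halfSpace_le ⟨g.map_add, g.map_smul⟩ M) hp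

lemma amax_key {X : Finset V} {g : V →ₗ[ℝ] ℝ} {y₀ : V} (hy₀ : y₀ ∈ amax X g) :
    ∀ p ∈ convexHull ℝ (X : Set V), g p = g y₀ → p ∈ convexHull ℝ ((amax X g : Finset V) : Set V) := by
  intro p hp hgp
  obtain ⟨w, hw0, hw1, hwp⟩ := Finset.mem_convexHull'.1 hp
  have hgsum : ∑ y ∈ X, w y * g y = g y₀ := by
    rw [← hgp, ← hwp, map_sum]
    exact Finset.sum_congr rfl fun y _ => by rw [map_smul, smul_eq_mul]
  have hzero : ∀ y ∈ X, y ∉ amax X g → w y = 0 := by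
    intro y hyX hyn
    by_contra hne
    have hwy : 0 < w y := lt_of_le_of_ne (hw0 y hyX) (Ne.symm hne)
    have hlt : ∑ y ∈ X, w y * g y < ∑ y ∈ X, w y * g y₀ := by
      refine Finset.sum_lt_sum (fun i hi => mul_le_mul_of_nonneg_left
        ((mem_amax.1 hy₀).2 i hi) (hw0 i hi)) ⟨y, hyX, ?_⟩
      exact mul_lt_mul_of_pos_left (amax_lt hy₀ hyX hyn) hwy
    rw [← Finset.sum_mul, hw1, one_mul, hgsum] at hlt
    exact lt_irrefl _ hlt
  refine Finset.mem_convexHull'.2 ⟨w, fun y hy => hw0 y (amax_subset hy), ?_, ?_⟩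
  · rw [Finset.sum_subset amax_subset fun y hyX hyn => hzero y hyX hyn]; exact hw1
  · rw [Finset.sum_subset amax_subset fun y hyX hyn => by rw [hzero y hyX hyn, zero_smul]]
    exact hwp

lemma amax_hull_val {X : Finset V} {g : V →ₗ[ℝ] ℝ} {y₀ : V} (hy₀ : y₀ ∈ amax X g) :
    ∀ p ∈ convexHull ℝ ((amax X g : Finset V) : Set V), g p = g y₀ := by
  intro p hp
  have h1 : g p ≤ g y₀ := convexHull_le_of_max (X := amax X g)
    (fun z hz => (mem_amax.1 hy₀).2 z (amax_subset hz)) p hp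
  have h2 : g y₀ ≤ g p := by
    have : convexHull ℝ ((amax X g : Finset V) : Set V) ⊆ {z | g y₀ ≤ g z} :=
      convexHull_min (fun z hz => (amax_val hy₀ z hz).ge)
        (convex_halfSpace_ge ⟨g.map_add, g.map_smul⟩ (g y₀))
    exact this hp
  linarith

lemma amax_isExtreme {X : Finset V} {g : V →ₗ[ℝ] ℝ} {y₀ : V} (hy₀ : y₀ ∈ amax X g) :
    IsExtreme ℝ (convexHull ℝ (X : Set V)) (convexHull ℝ ((amax X g : Finset V) : Set V)) := by
  refine ⟨convexHull_mono (Finset.coe_subset.2 amax_subset), ?_⟩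
  rintro x₁ hx₁ x₂ hx₂ p hp ⟨a, b, ha, hb, hab, hpeq⟩
  have hgp : g p = g y₀ := amax_hull_val hy₀ p hp
  have hg₁ : g x₁ ≤ g y₀ := convexHull_le_of_max
    (fun z hz => (mem_amax.1 hy₀).2 z hz) x₁ hx₁
  have hg₂ : g x₂ ≤ g y₀ := convexHull_le_of_max
    (fun z hz => (mem_amax.1 hy₀).2 z hz) x₂ hx₂
  have hsum : a * g x₁ + b * g x₂ = g y₀ := by
    rw [← hgp, ← hpeq, map_add, map_smul, map_smul, smul_eq_mul, smul_eq_mul]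
  have h3 : a * g y₀ + b * g y₀ = g y₀ := by rw [← add_mul, hab, one_mul]
  have he₁ : g x₁ = g y₀ := by
    by_contra h
    have h1 := mul_lt_mul_of_pos_left (lt_of_le_of_ne hg₁ h) ha
    have h2 := mul_le_mul_of_nonneg_left hg₂ hb.le
    linarith
  have he₂ : g x₂ = g y₀ := by
    by_contra h
    have h1 := mul_lt_mul_of_pos_left (lt_of_le_of_ne hg₂ h) hb
    have h2 := mul_le_mul_of_nonneg_left hg₁ ha.le
    linarith
  exact amax_key hy₀ x₁ hx₁ he₁
lemma amax_finrank_lt (X : Finset V) (g : V →ₗ[ℝ] ℝ) {w : V} (hw : w ∈ X) (hnw : w ∉ amax X g)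
    (hne : (amax X g).Nonempty) :
    Module.finrank ℝ (vectorSpan ℝ ((amax X g : Finset V) : Set V)) <
      Module.finrank ℝ (vectorSpan ℝ (X : Set V)) := by
  by_contra hle
  push_neg at hle
  obtain ⟨y₀, hy₀⟩ := hne
  haveI : FiniteDimensional ℝ (vectorSpan ℝ (X : Set V)) :=
    finiteDimensional_vectorSpan_of_finite ℝ X.finite_toSet
  have h1 : vectorSpan ℝ ((amax X g : Finset V) : Set V) ≤ vectorSpan ℝ (X : Set V) :=
    vectorSpan_mono ℝ (Finset.coe_subset.2 amax_subset)
  have h2 : vectorSpan ℝ ((amax X g : Finset V) : Set V) = vectorSpan ℝ (X : Set V) :=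
    Submodule.eq_of_le_of_finrank_le h1 hle
  have h3 : affineSpan ℝ ((amax X g : Finset V) : Set V) = affineSpan ℝ (X : Set V) := by
    apply AffineSubspace.ext_of_direction_eq
    · rw [direction_affineSpan, direction_affineSpan, h2]
    · exact ⟨y₀, mem_affineSpan ℝ (Finset.mem_coe.2 hy₀),
        mem_affineSpan ℝ (Finset.mem_coe.2 (amax_subset hy₀))⟩
  have hwspan : w ∈ affineSpan ℝ ((amax X g : Finset V) : Set V) := by
    rw [h3]; exact mem_affineSpan ℝ (Finset.mem_coe.2 hw)
  rw [← Subtype.range_coe (s := ((amax X g : Finset V) : Set V))] at hwspan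
  obtain ⟨s, ws, hws, hweq⟩ := eq_affineCombination_of_mem_affineSpan hwspan
  have hgw : g w = g y₀ := by
    rw [hweq, Finset.affineCombination_eq_linear_combination _ _ _ hws, map_sum]
    have hterm : ∀ i ∈ s, g ((ws i) • (i : V)) = ws i * g y₀ := fun i hi => by
      rw [map_smul, smul_eq_mul, amax_val hy₀ (i : V) (Finset.mem_coe.1 i.2)]
    rw [Finset.sum_congr rfl hterm, ← Finset.sum_mul, hws, one_mul]
  exact hnw (mem_amax.2 ⟨hw, fun z hz => hgw ▸ (mem_amax.1 hy₀).2 z hz⟩)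

lemma amax_enlarge (X : Finset V) (g : V →ₗ[ℝ] ℝ) {w : V} (hw : w ∈ X) (hnw : w ∉ amax X g)
    (hne : (amax X g).Nonempty)
    (hdim : Module.finrank ℝ (vectorSpan ℝ ((amax X g : Finset V) : Set V)) + 2 ≤
      Module.finrank ℝ (vectorSpan ℝ (X : Set V))) :
    ∃ g' : V →ₗ[ℝ] ℝ, amax X g ⊂ amax X g' ∧ w ∉ amax X g' := by
  classical
  obtain ⟨y₀, hy₀⟩ := hne
  set M := g y₀ with hM
  set U₁ : Submodule ℝ V := vectorSpan ℝ (insert w ((amax X g : Finset V) : Set V)) with hU₁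
  haveI : FiniteDimensional ℝ U₁ :=
    finiteDimensional_vectorSpan_of_finite ℝ ((amax X g).finite_toSet.insert w)
  haveI : FiniteDimensional ℝ (vectorSpan ℝ (X : Set V)) :=
    finiteDimensional_vectorSpan_of_finite ℝ X.finite_toSet
  have hU₁rank : Module.finrank ℝ U₁ ≤
      Module.finrank ℝ (vectorSpan ℝ ((amax X g : Finset V) : Set V)) + 1 :=
    finrank_vectorSpan_insert_le_set ℝ _ w
  -- there is a point of X whose difference with w is not in U₁
  obtain ⟨z₁, hz₁X, hz₁U⟩ : ∃ z₁ ∈ X, z₁ - w ∉ U₁ := by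
    by_contra hcon
    push_neg at hcon
    have hle : vectorSpan ℝ (X : Set V) ≤ U₁ := by
      rw [vectorSpan_def, Submodule.span_le]
      rintro v hv
      obtain ⟨p, hp, q, hq, hpq⟩ := Set.mem_vsub.1 hv
      have hveq : v = (p - w) - (q - w) := by rw [← hpq, vsub_eq_sub]; abel
      rw [hveq]
      exact U₁.sub_mem (hcon p (Finset.mem_coe.1 hp)) (hcon q (Finset.mem_coe.1 hq))
    have := Submodule.finrank_mono hle
    omega
  -- a linear functional vanishing on U₁ and nonzero on z₁ - w
  have hwY : w ∈ insert w ((amax X g : Finset V) : Set V) := Set.mem_insert _ _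
  haveI : IsClosed (U₁ : Set V) := U₁.closed_of_finiteDimensional
  have hq0 : U₁.mkQ (z₁ - w) ≠ 0 := by
    rw [Ne, Submodule.mkQ_apply, Submodule.Quotient.mk_eq_zero]
    exact hz₁U
  obtain ⟨f, -, hfv⟩ := exists_dual_vector ℝ (U₁.mkQ (z₁ - w)) (norm_ne_zero_iff.2 hq0)
  set h : V →ₗ[ℝ] ℝ := f.toLinearMap.comp U₁.mkQ with hh
  have hker : ∀ v ∈ U₁, h v = 0 := by
    intro v hv
    have : U₁.mkQ v = 0 := (Submodule.Quotient.mk_eq_zero _).2 hv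
    simp [hh, this]
  have hconst : ∀ y ∈ amax X g, h y = h w := by
    intro y hy
    have hmem : y - w ∈ U₁ := by
      have := vsub_mem_vectorSpan ℝ (Set.mem_insert_of_mem w (Finset.mem_coe.2 hy)) hwY
      rwa [vsub_eq_sub] at this
    have := hker _ hmem
    rw [map_sub] at this
    linarith
  have hz₁ne : h z₁ ≠ h w := by
    have : h z₁ - h w = f (U₁.mkQ (z₁ - w)) := by simp [hh]
    intro hcontra
    rw [hcontra, sub_self] at this
    rw [hfv] at this
    have : ‖U₁.mkQ (z₁ - w)‖ = 0 := by exact_mod_cast this.symm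
    exact hq0 (norm_eq_zero.1 this)
  -- main construction, for a functional with some value above h w
  have main : ∀ h : V →ₗ[ℝ] ℝ, (∀ y ∈ amax X g, h y = h w) → (∃ z ∈ X, h w < h z) →
      ∃ g' : V →ₗ[ℝ] ℝ, amax X g ⊂ amax X g' ∧ w ∉ amax X g' := by
    clear hconst hz₁ne hker hz₁U hz₁X
    intro h hconst hex
    set c := h w with hc
    set Z : Finset V := X.filter (fun z => c < h z) with hZ
    obtain ⟨z₁, hz₁X, hz₁gt⟩ := hex
    have hz₁Z : z₁ ∈ Z := Finset.mem_filter.2 ⟨hz₁X, hz₁gt⟩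
    have hZX : ∀ z ∈ Z, z ∈ X := fun z hz => (Finset.mem_filter.1 hz).1
    have hZgt : ∀ z ∈ Z, c < h z := fun z hz => (Finset.mem_filter.1 hz).2
    have hZnotam : ∀ z ∈ Z, z ∉ amax X g := by
      intro z hz hzam
      have := hconst z hzam
      have := hZgt z hz
      linarith
    have hZltM : ∀ z ∈ Z, g z < M := fun z hz =>
      amax_lt hy₀ (hZX z hz) (hZnotam z hz)
    set tt : V → ℝ := fun z => (M - g z) / (h z - c) with htt
    have httpos : ∀ z ∈ Z, 0 < tt z := fun z hz =>
      div_pos (sub_pos.2 (hZltM z hz)) (sub_pos.2 (hZgt z hz))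
    set ts : ℝ := Z.inf' ⟨z₁, hz₁Z⟩ tt with hts
    have htspos : 0 < ts := (Finset.lt_inf'_iff _).2 httpos
    set g' : V →ₗ[ℝ] ℝ := g + ts • h with hg'
    have hg'apply : ∀ v : V, g' v = g v + ts * h v := fun v => rfl
    have hg'Y : ∀ y ∈ amax X g, g' y = M + ts * c := by
      intro y hy
      rw [hg'apply, amax_val hy₀ y hy, hconst y hy]
    have hg'le : ∀ z ∈ X, g' z ≤ M + ts * c := by
      intro z hz
      rw [hg'apply]
      by_cases hzc : h z ≤ c
      · have h1 : g z ≤ M := (mem_amax.1 hy₀).2 z hz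
        have h2 : ts * h z ≤ ts * c := mul_le_mul_of_nonneg_left hzc htspos.le
        linarith
      · push_neg at hzc
        have hzZ : z ∈ Z := Finset.mem_filter.2 ⟨hz, hzc⟩
        have h1 : ts ≤ tt z := Finset.inf'_le tt hzZ
        have h2 : ts * (h z - c) ≤ M - g z := by
          rw [htt] at h1
          have := (le_div_iff₀ (sub_pos.2 hzc)).1 h1
          linarith
        have h3 : ts * (h z - c) = ts * h z - ts * c := mul_sub ts (h z) c
        linarith
    obtain ⟨zs, hzsZ, hzseq⟩ := Finset.exists_mem_eq_inf' ⟨z₁, hz₁Z⟩ tt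
    have hzs_ne : h zs - c ≠ 0 := ne_of_gt (sub_pos.2 (hZgt zs hzsZ))
    have hkey : tt zs * (h zs - c) = M - g zs := by
      rw [htt]
      exact div_mul_cancel₀ _ hzs_ne
    have hts_eq : ts = tt zs := by rw [hts, hzseq]
    have hg'zs : g' zs = M + ts * c := by
      have h2 : ts * (h zs - c) = M - g zs := by rw [hts_eq]; exact hkey
      have h3 : ts * (h zs - c) = ts * h zs - ts * c := mul_sub ts (h zs) c
      have h4 : g' zs = g zs + ts * h zs := hg'apply zs
      linarith
    have hmm : ∀ y ∈ X, g' y = M + ts * c → y ∈ amax X g' := by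
      intro y hyX hyval
      exact mem_amax.2 ⟨hyX, fun z hz => by rw [hyval]; exact hg'le z hz⟩
    have hsub : amax X g ⊆ amax X g' := fun y hy =>
      hmm y (amax_subset hy) (hg'Y y hy)
    have hzsmem : zs ∈ amax X g' := hmm zs (hZX zs hzsZ) hg'zs
    have hwlt : g' w < M + ts * c := by
      rw [hg'apply, ← hc]
      have : g w < M := amax_lt hy₀ hw hnw
      linarith
    have hwnot : w ∉ amax X g' := by
      intro hcon
      have := (mem_amax.1 hcon).2 y₀ (amax_subset hy₀)
      rw [hg'Y y₀ hy₀] at this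
      linarith
    exact ⟨g', (Finset.ssubset_iff_of_subset hsub).2 ⟨zs, hzsmem, hZnotam zs hzsZ⟩, hwnot⟩
  rcases hz₁ne.lt_or_gt with hlt' | hlt'
  · refine main (-h) (fun y hy => by simp [hconst y hy]) ⟨z₁, hz₁X, ?_⟩
    simp only [LinearMap.neg_apply]
    linarith
  · exact main h hconst ⟨z₁, hz₁X, hlt'⟩

lemma exists_amax_facet (X : Finset V) {w : V} (hw : w ∈ X) :
    ∀ (k : ℕ) (g : V →ₗ[ℝ] ℝ), (amax X g).Nonempty → w ∉ amax X g →
      X.card ≤ (amax X g).card + k →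
      ∃ g' : V →ₗ[ℝ] ℝ, amax X g ⊆ amax X g' ∧ w ∉ amax X g' ∧ (amax X g').Nonempty ∧
        Module.finrank ℝ (vectorSpan ℝ ((amax X g' : Finset V) : Set V)) + 1 =
          Module.finrank ℝ (vectorSpan ℝ (X : Set V)) := by
  intro k
  induction k with
  | zero =>
    intro g hne hnw hcard
    have heq : amax X g = X := Finset.eq_of_subset_of_card_le amax_subset (by omega)
    rw [heq] at hnw
    exact absurd hw hnw
  | succ k ih =>
    intro g hne hnw hcard
    have hlt := amax_finrank_lt X g hw hnw hne
    by_cases hdim : Module.finrank ℝ (vectorSpan ℝ ((amax X g : Finset V) : Set V)) + 1 =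
        Module.finrank ℝ (vectorSpan ℝ (X : Set V))
    · exact ⟨g, subset_rfl, hnw, hne, hdim⟩
    · obtain ⟨g', hsub, hnw'⟩ := amax_enlarge X g hw hnw hne (by omega)
      have hne' : (amax X g').Nonempty := hne.mono hsub.subset
      have hcard' : X.card ≤ (amax X g').card + k := by
        have := Finset.card_lt_card hsub
        omega
      obtain ⟨g'', h1, h2, h3, h4⟩ := ih g' hne' hnw' hcard'
      exact ⟨g'', hsub.subset.trans h1, h2, h3, h4⟩
lemma affineIndependent_of_card_of_sdim {d : ℕ} (hd : 1 ≤ d) {s : Finset V} (hcard : s.card = d)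
    (hdim : sdim (convexHull ℝ (s : Set V)) = (d : ℤ) - 1) :
    AffineIndependent ℝ ((↑) : s → V) := by
  have hne : (s : Set V).Nonempty := by
    rw [Finset.coe_nonempty]
    exact Finset.card_pos.1 (by omega)
  rw [sdim_convexHull_eq hne] at hdim
  have hfin : Module.finrank ℝ (vectorSpan ℝ (s : Set V)) = d - 1 := by omega
  have hc : Fintype.card ↥s = (d - 1) + 1 := by
    rw [Fintype.card_coe]; omega
  rw [affineIndependent_iff_finrank_vectorSpan_eq ℝ _ hc]
  have hrange : range ((↑) : s → V) = (s : Set V) := Subtype.range_coe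
  rw [show vectorSpan ℝ (range ((↑) : s → V)) = vectorSpan ℝ (s : Set V) by rw [hrange]]
  exact hfin
lemma edge_of_facet_simplex {Q : Set V} {d : ℕ} (hd : 1 ≤ d) {s : Finset V}
    (hfac : IsFacetOf d Q (convexHull ℝ (s : Set V))) (hcard : s.card = d)
    {a b : V} (ha : a ∈ s) (hb : b ∈ s) (hab : a ≠ b) : IsEdgeOf Q a b := by
  classical
  have hindep := affineIndependent_of_card_of_sdim hd hcard hfac.2
  have hpair : ({a, b} : Finset V) ⊆ s := by
    intro y hy
    rcases Finset.mem_insert.1 hy with rfl | hy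
    · exact ha
    · rw [Finset.mem_singleton.1 hy]; exact hb
  have hext := hindep.isExtreme_convexHull_of_subset hpair
  have hseg : (convexHull ℝ ((({a, b} : Finset V) : Finset V) : Set V)) = segment ℝ a b := by
    rw [Finset.coe_insert, Finset.coe_singleton, convexHull_pair]
  rw [hseg] at hext
  refine ⟨⟨hfac.1.1.trans hext, convex_segment a b, ?_⟩, sdim_segment hab⟩
  rw [← hseg]
  exact ((Finset.finite_toSet _).isCompact_convexHull ℝ).isClosed

open scoped Pointwise in
lemma braxtope_not_edge_middle {d n : ℕ} (hd : 3 ≤ d) (hn : d ≤ n)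
    {x : Fin (n + 1) → V} (hinj : Function.Injective x)
    (hsdim : sdim (braxQ x) = d)
    (hext : ∀ i, x i ∈ Set.extremePoints ℝ (braxQ x))
    (hfacets : ∀ F : Set V, IsFacetOf d (braxQ x) F ↔
      (∃ i : ℤ, 0 ≤ i ∧ i ≤ (n : ℤ) - d + 1 ∧ F = convexHull ℝ (Tset d x i)) ∨
      (∃ j : ℤ, 2 ≤ j ∧ j ≤ (n : ℤ) ∧ F = convexHull ℝ (Eset d x j)))
    {u : Fin (n + 1)} (hu1 : 1 ≤ (u : ℕ)) (hu2 : (u : ℕ) ≤ n - d) :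
    ¬ IsExtreme ℝ (braxQ x) (segment ℝ (x u) (x (Fin.last n))) := by
  classical
  intro hS
  set Q := braxQ x with hQdef
  have hQconv : Convex ℝ Q := convex_convexHull ℝ _
  have hQx : ∀ i, x i ∈ Q := fun i => subset_convexHull ℝ _ (mem_range_self i)
  set a := x u with hadef
  set b := x (Fin.last n) with hbdef
  have hune : u ≠ Fin.last n := by
    intro hco
    rw [Fin.ext_iff, Fin.val_last] at hco
    omega
  have hab : a ≠ b := fun hco => hune (hinj hco)
  set X : Finset V := Finset.univ.image x with hXdef
  have hXcoe : (X : Set V) = Set.range x := by rw [hXdef]; simp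
  have hmemX : ∀ i, x i ∈ X := fun i => Finset.mem_image_of_mem x (Finset.mem_univ i)
  have hQeq : Q = convexHull ℝ (X : Set V) := by rw [hXcoe]; rfl
  have hS_vertex : ∀ v : Fin (n + 1), x v ∈ segment ℝ a b → v = u ∨ v = Fin.last n := by
    intro v hv
    by_contra hcon
    push_neg at hcon
    have h1 : x v ≠ a := fun h => hcon.1 (hinj h)
    have h2 : x v ≠ b := fun h => hcon.2 (hinj h)
    have hop : x v ∈ openSegment ℝ a b :=
      mem_openSegment_of_ne_left_right (Ne.symm h1) (Ne.symm h2) hv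
    have := (hext v).2 (hQx u) (hQx (Fin.last n)) hop
    exact hcon.1 (hinj this).symm
  set B : Finset V := (X.erase b).erase a with hBdef
  have hBmem : ∀ y ∈ B, ∃ v : Fin (n + 1), x v = y ∧ v ≠ u ∧ v ≠ Fin.last n := by
    intro y hy
    have hyX : y ∈ X := Finset.mem_of_mem_erase (Finset.mem_of_mem_erase hy)
    obtain ⟨v, -, rfl⟩ := Finset.mem_image.1 hyX
    refine ⟨v, rfl, fun h => ?_, fun h => ?_⟩
    · exact (Finset.mem_erase.1 hy).1 (by rw [h])
    · exact (Finset.mem_erase.1 (Finset.mem_of_mem_erase hy)).1 (by rw [h])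
  have hvB : ∀ v : Fin (n + 1), v ≠ u → v ≠ Fin.last n → x v ∈ B := by
    intro v h1 h2
    exact Finset.mem_erase.2 ⟨fun h => h1 (hinj h),
      Finset.mem_erase.2 ⟨fun h => h2 (hinj h), hmemX v⟩⟩
  have hBX : ∀ y ∈ B, y ∈ X := fun y hy =>
    Finset.mem_of_mem_erase (Finset.mem_of_mem_erase hy)
  have hBQ : (B : Set V) ⊆ Q := by
    intro y hy
    rw [hQeq]
    exact subset_convexHull ℝ _ (Finset.mem_coe.2 (hBX y (Finset.mem_coe.1 hy)))
  have hBS : ∀ p ∈ convexHull ℝ (B : Set V), p ∉ segment ℝ a b := by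
    intro p hpB hpS
    obtain ⟨y, hyB, hyS⟩ := hS.exists_mem_of_convexHull hQconv B hBQ hpB hpS
    obtain ⟨v, rfl, hvu, hvl⟩ := hBmem y hyB
    rcases hS_vertex v hyS with h | h
    exacts [hvu h, hvl h]
  set vv := b - a with hvvdef
  set K : Set V := convexHull ℝ (B : Set V) + (↑(ℝ ∙ vv) : Set V) with hKdef
  have hKconv : Convex ℝ K := (convex_convexHull ℝ _).add (Submodule.convex _)
  have hKclosed : IsClosed K := IsClosed.add_left_of_isCompact
    (Submodule.closed_of_finiteDimensional _) (B.finite_toSet.isCompact_convexHull ℝ)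
  have hbK : b ∉ K := by
    intro hmem
    rw [hKdef, Set.mem_add] at hmem
    obtain ⟨q, hq, z, hz, hsum⟩ := hmem
    obtain ⟨r, rfl⟩ := Submodule.mem_span_singleton.1 hz
    have hqeq : q = r • a + (1 - r) • b := by
      have h1 : q = b - r • vv := eq_sub_of_add_eq hsum
      rw [h1, hvvdef]
      module
    have hqQ : q ∈ Q := convexHull_min hBQ hQconv hq
    rcases le_or_gt 0 r with hr0 | hr0
    · rcases le_or_gt r 1 with hr1 | hr1
      · exact hBS q hq ⟨r, 1 - r, hr0, by linarith, by ring, hqeq.symm⟩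
      · have hrpos : (0 : ℝ) < r := by linarith
        have hop : a ∈ openSegment ℝ q b := by
          refine ⟨1 / r, (r - 1) / r, by positivity,
            div_pos (by linarith) hrpos, ?_, ?_⟩
          · field_simp <;> ring
          · rw [hqeq]
            match_scalars <;> field_simp <;> ring
        have := (hext u).2 (hQx (Fin.last n)) hqQ (by rw [openSegment_symm]; exact hop)
        exact hab this.symm
    · have hrpos : (0 : ℝ) < 1 - r := by linarith
      have hop : b ∈ openSegment ℝ q a := by
        refine ⟨1 / (1 - r), (-r) / (1 - r), by positivity,
          div_pos (by linarith) hrpos, ?_, ?_⟩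
        · field_simp <;> ring
        · rw [hqeq]
          match_scalars <;> field_simp <;> ring
      have := (hext (Fin.last n)).2 (hQx u) hqQ (by rw [openSegment_symm]; exact hop)
      exact hab this
  obtain ⟨f, β, hfK, hfb⟩ := geometric_hahn_banach_closed_point hKconv hKclosed hbK
  have h0u : (0 : Fin (n + 1)) ≠ u := by
    intro h
    have := congrArg Fin.val h
    simp only [Fin.val_zero] at this
    omega
  have h0l : (0 : Fin (n + 1)) ≠ Fin.last n := by
    intro h
    have := congrArg Fin.val h
    simp only [Fin.val_zero, Fin.val_last] at this
    omega
  have h0B : x 0 ∈ B := hvB 0 h0u h0l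
  have hf0 : f vv = 0 := by
    by_contra hne
    set r := (β + 1 - f (x 0)) / f vv with hrdef
    have hmemK : x 0 + r • vv ∈ K := by
      rw [hKdef]
      exact Set.add_mem_add (subset_convexHull ℝ _ (Finset.mem_coe.2 h0B))
        (Submodule.smul_mem _ r (Submodule.mem_span_singleton_self vv))
    have hlt := hfK _ hmemK
    rw [map_add, map_smul, smul_eq_mul, hrdef, div_mul_cancel₀ _ hne] at hlt
    linarith
  have hfab : f a = f b := by
    have h1 : f vv = f b - f a := by rw [hvvdef, map_sub]
    rw [hf0] at h1
    linarith
  have hfBlt : ∀ y ∈ B, f y < f b := by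
    intro y hy
    have hyK : y ∈ K := by
      have h1 : y + (0 : V) ∈ K := by
        rw [hKdef]
        exact Set.add_mem_add (subset_convexHull ℝ _ (Finset.mem_coe.2 hy))
          (Submodule.zero_mem _)
      simpa using h1
    exact (hfK y hyK).trans hfb
  set g₀ : V →ₗ[ℝ] ℝ := (f : V →ₗ[ℝ] ℝ) with hg₀def
  have hg₀app : ∀ v : V, g₀ v = f v := fun v => rfl
  have hg₀max : ∀ z ∈ X, g₀ z ≤ g₀ b := by
    intro z hz
    obtain ⟨v, -, rfl⟩ := Finset.mem_image.1 hz
    rw [hg₀app, hg₀app]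
    by_cases hvu : v = u
    · subst hvu; exact le_of_eq hfab
    · by_cases hvl : v = Fin.last n
      · subst hvl; exact le_rfl
      · exact (hfBlt _ (hvB v hvu hvl)).le
  have hbamax : b ∈ amax X g₀ := mem_amax.2 ⟨hmemX _, hg₀max⟩
  have haamax : a ∈ amax X g₀ := by
    refine mem_amax.2 ⟨hmemX _, fun z hz => ?_⟩
    have h2 : g₀ a = g₀ b := by rw [hg₀app, hg₀app]; exact hfab
    rw [h2]
    exact hg₀max z hz
  have h0namax : x 0 ∉ amax X g₀ := by
    intro hcon
    have h1 := (mem_amax.1 hcon).2 b (hmemX _)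
    have h2 := hfBlt (x 0) h0B
    rw [hg₀app, hg₀app] at h1
    linarith
  have hD : Module.finrank ℝ (vectorSpan ℝ (X : Set V)) = d := by
    have h1 : sdim (convexHull ℝ (Set.range x)) = d := hsdim
    rw [← hXcoe] at h1
    rw [sdim_convexHull_eq ⟨b, Finset.mem_coe.2 (hmemX _)⟩] at h1
    exact_mod_cast h1
  obtain ⟨g, hsub, hnw, hne', hfr⟩ := exists_amax_facet X (hmemX 0) X.card g₀
    ⟨b, hbamax⟩ h0namax (by omega)
  have haY : a ∈ amax X g := hsub haamax
  have hbY : b ∈ amax X g := hsub hbamax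
  have hYQ : convexHull ℝ ((amax X g : Finset V) : Set V) ⊆ Q := by
    rw [hQeq]
    exact convexHull_mono (Finset.coe_subset.2 amax_subset)
  have hfacetY : IsFacetOf d Q (convexHull ℝ ((amax X g : Finset V) : Set V)) := by
    refine ⟨⟨?_, convex_convexHull ℝ _,
      ((Finset.finite_toSet _).isCompact_convexHull ℝ).isClosed⟩, ?_⟩
    · rw [hQeq]
      exact amax_isExtreme hbY
    · rw [sdim_convexHull_eq ⟨b, Finset.mem_coe.2 hbY⟩]
      rw [hD] at hfr
      omega
  rcases (hfacets _).1 hfacetY with ⟨i, hi0, hi1, hFeq⟩ | ⟨j, hj2, hjn, hFeq⟩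
  · -- T case
    have hTsub : Tset d x i ⊆ Set.range x := by
      rintro y ⟨t, ht, rfl⟩
      exact ⟨_, rfl⟩
    have hTQ : convexHull ℝ (Tset d x i) ⊆ Q :=
      convexHull_min (hTsub.trans (subset_convexHull ℝ _)) hQconv
    have hbT : b ∈ Tset d x i := by
      have hbF : b ∈ convexHull ℝ (Tset d x i) := by
        rw [← hFeq]
        exact subset_convexHull ℝ _ (Finset.mem_coe.2 hbY)
      exact extremePoints_convexHull_subset
        (mem_extremePoints_of_subset (hext (Fin.last n)) hTQ hbF)
    have haT : a ∈ Tset d x i := by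
      have haF : a ∈ convexHull ℝ (Tset d x i) := by
        rw [← hFeq]
        exact subset_convexHull ℝ _ (Finset.mem_coe.2 haY)
      exact extremePoints_convexHull_subset
        (mem_extremePoints_of_subset (hext u) hTQ haF)
    obtain ⟨t1, ht1, heq1⟩ := hbT
    obtain ⟨t2, ht2, heq2⟩ := haT
    rw [Set.mem_Icc] at ht1 ht2
    have hb1 : (min (max t1 0) (n : ℤ)).toNat = n := by
      have h1 := hinj heq1
      have := congrArg Fin.val h1
      simpa using this
    have ha1 : (min (max t2 0) (n : ℤ)).toNat = (u : ℕ) := by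
      have h1 := hinj heq2
      have := congrArg Fin.val h1
      simpa using this
    have hdn' : (3 : ℤ) ≤ (d : ℤ) := by exact_mod_cast hd
    have hnd' : (d : ℤ) ≤ (n : ℤ) := by exact_mod_cast hn
    omega
  · -- E case
    have hx0F : x 0 ∈ convexHull ℝ ((amax X g : Finset V) : Set V) := by
      rw [hFeq]
      exact subset_convexHull ℝ _ (Set.mem_insert _ _)
    have hx0Y : x 0 ∈ amax X g := Finset.mem_coe.1
      (extremePoints_convexHull_subset (mem_extremePoints_of_subset (hext 0) hYQ hx0F))
    exact hnw hx0Y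
section Brax

variable {d n : ℕ} {x : Fin (n + 1) → V} [DecidableEq V]

lemma Tcoe (hd : 3 ≤ d) (hn : d ≤ n) :
    ((Finset.image x (Finset.Icc (⟨n - d + 1, by omega⟩ : Fin (n + 1)) ⟨n, by omega⟩)
      : Finset V) : Set V) = Tset d x ((n : ℤ) - d + 1) := by
  have hdn : (3 : ℤ) ≤ (d : ℤ) := by exact_mod_cast hd
  have hnd : (d : ℤ) ≤ (n : ℤ) := by exact_mod_cast hn
  ext y
  simp only [Finset.coe_image, Set.mem_image, Finset.mem_coe, Finset.mem_Icc, Tset,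
    Set.mem_Icc, xc]
  constructor
  · rintro ⟨⟨vval, hvlt⟩, ⟨hv1, hv2⟩, rfl⟩
    have hv1' : n - d + 1 ≤ vval := Fin.mk_le_mk.1 hv1
    have hv2' : vval ≤ n := Fin.mk_le_mk.1 hv2
    refine ⟨(vval : ℤ), ⟨by omega, by omega⟩, ?_⟩
    exact congrArg x (Fin.ext
      (show (min (max ((vval : ℕ) : ℤ) 0) (n : ℤ)).toNat = vval by omega))
  · rintro ⟨t, ⟨ht1, ht2⟩, rfl⟩
    refine ⟨⟨(min (max t 0) (n : ℤ)).toNat, by omega⟩, ⟨?_, ?_⟩, rfl⟩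
    · exact Fin.mk_le_mk.2 (by omega)
    · exact Fin.mk_le_mk.2 (by omega)

lemma Ecoe (hd : 3 ≤ d) (hn : d ≤ n) :
    ((Finset.image x (insert (0 : Fin (n + 1))
        (Finset.Icc (⟨n - d + 2, by omega⟩ : Fin (n + 1)) ⟨n, by omega⟩))
      : Finset V) : Set V) = Eset d x (n : ℤ) := by
  have hdn : (3 : ℤ) ≤ (d : ℤ) := by exact_mod_cast hd
  have hnd : (d : ℤ) ≤ (n : ℤ) := by exact_mod_cast hn
  ext y
  simp only [Finset.coe_image, Set.mem_image, Finset.mem_coe, Finset.mem_insert,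
    Finset.mem_Icc, Eset, Set.mem_insert_iff, Set.mem_diff, Set.mem_Icc,
    Set.mem_singleton_iff, xc]
  constructor
  · rintro ⟨⟨vval, hvlt⟩, hv, rfl⟩
    rcases hv with hv0 | ⟨hv1, hv2⟩
    · left
      have : vval = 0 := by
        have := congrArg Fin.val hv0
        simpa using this
      subst this
      rfl
    · right
      have hv1' : n - d + 2 ≤ vval := Fin.mk_le_mk.1 hv1
      have hv2' : vval ≤ n := Fin.mk_le_mk.1 hv2
      by_cases hvn : vval = n
      · refine ⟨(n : ℤ) + 1, ⟨⟨by omega, by omega⟩, by omega⟩, ?_⟩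
        exact congrArg x (Fin.ext
          (show (min (max ((n : ℤ) + 1) 0) (n : ℤ)).toNat = vval by omega))
      · refine ⟨(vval : ℤ), ⟨⟨by omega, by omega⟩, by omega⟩, ?_⟩
        exact congrArg x (Fin.ext
          (show (min (max ((vval : ℕ) : ℤ) 0) (n : ℤ)).toNat = vval by omega))
  · rintro (hy0 | ⟨t, ⟨⟨ht1, ht2⟩, htn⟩, rfl⟩)
    · exact ⟨0, Or.inl rfl, hy0.symm⟩
    · refine ⟨⟨(min (max t 0) (n : ℤ)).toNat, by omega⟩, Or.inr ⟨?_, ?_⟩, rfl⟩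
      · exact Fin.mk_le_mk.2 (by omega)
      · exact Fin.mk_le_mk.2 (by omega)

lemma Tcard (hd : 3 ≤ d) (hn : d ≤ n) (hinj : Function.Injective x) :
    (Finset.image x (Finset.Icc (⟨n - d + 1, by omega⟩ : Fin (n + 1)) ⟨n, by omega⟩)).card
      = d := by
  rw [Finset.card_image_of_injective _ hinj, Fin.card_Icc]
  simp only []
  omega

lemma Ecard (hd : 3 ≤ d) (hn : d ≤ n) (hinj : Function.Injective x) :
    (Finset.image x (insert (0 : Fin (n + 1))
      (Finset.Icc (⟨n - d + 2, by omega⟩ : Fin (n + 1)) ⟨n, by omega⟩))).card = d := by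
  rw [Finset.card_image_of_injective _ hinj]
  rw [Finset.card_insert_of_notMem]
  · rw [Fin.card_Icc]
    simp only [Fin.val_zero]
    omega
  · intro hmem
    have h0 : (0 : Fin (n + 1)) = ⟨0, by omega⟩ := Fin.ext (by simp)
    rw [h0] at hmem
    have h1 := Fin.mk_le_mk.1 (Finset.mem_Icc.1 hmem).1
    omega

end Brax

/-- In a `d`-braxtope, `[x_u, x_n]` is an edge iff `u = 0` or
`n - (d-1) ≤ u ≤ n - 1`; in particular `x_n` is a simple vertex, lying on
exactly `d` edges. -/
theorem braxtope_edges_on_xn (d n : ℕ) (hd : 3 ≤ d) (hn : d ≤ n)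
    (x : Fin (n + 1) → V) (hx : IsBraxtope d n x) :
    (∀ u : Fin (n + 1),
      IsEdgeOf (braxQ x) (x u) (x (Fin.last n)) ↔
        (u : ℕ) = 0 ∨ (n - (d - 1) ≤ (u : ℕ) ∧ (u : ℕ) ≤ n - 1)) ∧
    {u : Fin (n + 1) | IsEdgeOf (braxQ x) (x u) (x (Fin.last n))}.ncard = d := by
  classical
  obtain ⟨-, h2⟩ := hx
  obtain ⟨-, hinj, hsdim, hext, hfacets⟩ := h2 hd
  set TFin : Finset (Fin (n + 1)) :=
    Finset.Icc (⟨n - d + 1, by omega⟩ : Fin (n + 1)) ⟨n, by omega⟩ with hTFin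
  set EFin : Finset (Fin (n + 1)) :=
    insert (0 : Fin (n + 1))
      (Finset.Icc (⟨n - d + 2, by omega⟩ : Fin (n + 1)) ⟨n, by omega⟩) with hEFin
  have hdn' : (3 : ℤ) ≤ (d : ℤ) := by exact_mod_cast hd
  have hnd' : (d : ℤ) ≤ (n : ℤ) := by exact_mod_cast hn
  have hmemTFin : ∀ v : Fin (n + 1), v ∈ TFin ↔ n - d + 1 ≤ (v : ℕ) := by
    intro v
    rw [hTFin, Finset.mem_Icc]
    simp only [Fin.le_def, Fin.val_mk, Fin.val_last]
    have := v.isLt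
    omega
  have hmemEFin : ∀ v : Fin (n + 1), v ∈ EFin ↔ (v : ℕ) = 0 ∨ n - d + 2 ≤ (v : ℕ) := by
    intro v
    rw [hEFin, Finset.mem_insert, Finset.mem_Icc]
    simp only [Fin.le_def, Fin.val_mk, Fin.val_last, Fin.ext_iff, Fin.val_zero]
    have := v.isLt
    omega
  have hTfacet : IsFacetOf d (braxQ x) (convexHull ℝ ((TFin.image x : Finset V) : Set V)) := by
    rw [show ((TFin.image x : Finset V) : Set V) = Tset d x ((n : ℤ) - d + 1) from
      Tcoe hd hn]
    exact (hfacets _).2 (Or.inl ⟨(n : ℤ) - d + 1, by omega, by omega, rfl⟩)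
  have hEfacet : IsFacetOf d (braxQ x) (convexHull ℝ ((EFin.image x : Finset V) : Set V)) := by
    rw [show ((EFin.image x : Finset V) : Set V) = Eset d x (n : ℤ) from Ecoe hd hn]
    exact (hfacets _).2 (Or.inr ⟨(n : ℤ), by omega, le_refl _, rfl⟩)
  have hlast_ne : ∀ u : Fin (n + 1), (u : ℕ) ≠ n → x u ≠ x (Fin.last n) := by
    intro u hu h
    exact hu (by rw [show u = Fin.last n from hinj h, Fin.val_last])
  -- the characterization
  have key : ∀ u : Fin (n + 1),
      IsEdgeOf (braxQ x) (x u) (x (Fin.last n)) ↔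
        (u : ℕ) = 0 ∨ (n - (d - 1) ≤ (u : ℕ) ∧ (u : ℕ) ≤ n - 1) := by
    intro u
    have hulast : (u : ℕ) ≤ n := by have := u.isLt; omega
    constructor
    · intro hedge
      by_contra hcon
      push_neg at hcon
      rcases Nat.eq_or_lt_of_le hulast with hun | hun
      · -- u = n : degenerate segment
        have : x u = x (Fin.last n) := by
          congr 1
          exact Fin.ext (by rw [Fin.val_last, hun])
        have h1 := hedge.2
        rw [this, segment_same, sdim_singleton] at h1
        exact absurd h1 (by norm_num)
      · -- 1 ≤ u ≤ n - d
        have hu1 : 1 ≤ (u : ℕ) := by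
          rcases Nat.eq_zero_or_pos (u : ℕ) with h | h
          · exact absurd h hcon.1
          · exact h
        have hu2 : (u : ℕ) ≤ n - d := by
          have := hcon.2
          omega
        exact braxtope_not_edge_middle hd hn hinj hsdim hext hfacets hu1 hu2 hedge.1.1
    · intro hor
      rcases hor with h0 | ⟨h1, h2⟩
      · -- use the E facet
        refine edge_of_facet_simplex (by omega) hEfacet (Ecard hd hn hinj) ?_ ?_
          (hlast_ne u (by omega))
        · exact Finset.mem_image_of_mem x ((hmemEFin u).2 (Or.inl h0))
        · exact Finset.mem_image_of_mem x ((hmemEFin (Fin.last n)).2 (by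
            rw [Fin.val_last]; omega))
      · -- use the T facet
        refine edge_of_facet_simplex (by omega) hTfacet (Tcard hd hn hinj) ?_ ?_
          (hlast_ne u (by omega))
        · exact Finset.mem_image_of_mem x ((hmemTFin u).2 (by omega))
        · exact Finset.mem_image_of_mem x ((hmemTFin (Fin.last n)).2 (by
            rw [Fin.val_last]; omega))
  refine ⟨key, ?_⟩
  -- counting
  set target : Finset (Fin (n + 1)) :=
    insert (0 : Fin (n + 1))
      (Finset.Icc (⟨n - d + 1, by omega⟩ : Fin (n + 1)) ⟨n - 1, by omega⟩) with htarget
  have hseteq : {u : Fin (n + 1) | IsEdgeOf (braxQ x) (x u) (x (Fin.last n))}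
      = (target : Set (Fin (n + 1))) := by
    ext u
    rw [Set.mem_setOf_eq, key u, Finset.mem_coe, htarget, Finset.mem_insert, Finset.mem_Icc]
    simp only [Fin.le_def, Fin.val_mk, Fin.ext_iff, Fin.val_zero]
    have := u.isLt
    omega
  rw [hseteq, Set.ncard_coe_finset, htarget]
  rw [Finset.card_insert_of_notMem, Fin.card_Icc]
  · simp only [Fin.val_mk]
    omega
  · intro hmem
    have h0 : (0 : Fin (n + 1)) = ⟨0, by omega⟩ := Fin.ext (by simp)
    rw [h0] at hmem
    have h1 := Fin.mk_le_mk.1 (Finset.mem_Icc.1 hmem).1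
    omega
end
end

section
/- In a d-braxtope Q^{d,n} with vertex array x_0 < ... < x_n (n ≥ d ≥ 3), for every t with 0 ≤ t ≤ n-k and every k with 2 ≤ k ≤ d-2, the triangle [x_0, x_{t+1}, x_{t+k}] is a 2-dimensional face of Q. -/
open Set

noncomputable section

variable {V : Type*} [NormedAddCommGroup V] [NormedSpace ℝ V]

section AuxBrax

variable {V : Type*} [NormedAddCommGroup V] [NormedSpace ℝ V]

lemma xc_eq {n : ℕ} (x : Fin (n + 1) → V) {m : ℤ} (h0 : 0 ≤ m) (hn : m ≤ (n : ℤ)) :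
    xc x m = x ⟨m.toNat, by omega⟩ := by
  unfold xc
  exact congrArg x (Fin.ext (by simp only []; omega))

lemma xc_congr {n : ℕ} (x : Fin (n + 1) → V) {a b : ℤ}
    (h : min (max a 0) (n : ℤ) = min (max b 0) (n : ℤ)) : xc x a = xc x b := by
  unfold xc
  exact congrArg x (Fin.ext (by simp only []; omega))

lemma xc_zero {n : ℕ} (x : Fin (n + 1) → V) : xc x 0 = x 0 := by
  rw [xc_eq x le_rfl (by omega)]
  exact congrArg x (Fin.ext (by simp))

lemma xc_inj {n : ℕ} {x : Fin (n + 1) → V} (hinj : Function.Injective x)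
    {a b : ℤ} (ha0 : 0 ≤ a) (han : a ≤ (n : ℤ)) (hb0 : 0 ≤ b) (hbn : b ≤ (n : ℤ))
    (h : xc x a = xc x b) : a = b := by
  rw [xc_eq x ha0 han, xc_eq x hb0 hbn] at h
  have := hinj h
  simp only [Fin.mk.injEq] at this
  omega

lemma mem_Eset' {d n : ℕ} (x : Fin (n + 1) → V) {j m : ℤ}
    (h1 : j - ((d : ℤ) - 2) ≤ m) (h2 : m ≤ j + ((d : ℤ) - 2)) (h3 : m ≠ j) :
    xc x m ∈ Eset d x j :=
  Set.mem_insert_of_mem _ ⟨m, ⟨⟨h1, h2⟩, h3⟩, rfl⟩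

lemma mem_Tset' {d n : ℕ} (x : Fin (n + 1) → V) {i m : ℤ}
    (h1 : i ≤ m) (h2 : m ≤ i + (d : ℤ) - 1) :
    xc x m ∈ Tset d x i :=
  ⟨m, ⟨h1, h2⟩, rfl⟩

lemma not_mem_Eset' {d n : ℕ} {x : Fin (n + 1) → V} (hinj : Function.Injective x)
    {j m : ℤ} (h0 : 1 ≤ m) (hmn : m ≤ (n : ℤ))
    (hc : ∀ c : ℤ, j - ((d : ℤ) - 2) ≤ c → c ≤ j + ((d : ℤ) - 2) → c ≠ j →
      min (max c 0) (n : ℤ) ≠ m) :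
    xc x m ∉ Eset d x j := by
  rintro (h | ⟨c, ⟨⟨hc1, hc2⟩, hc3⟩, hcx⟩)
  · have h' : xc x m = xc x 0 := h.trans (xc_zero x).symm
    have := xc_inj hinj (by omega) hmn le_rfl (by omega) h'
    omega
  · have hcc : xc x c = xc x (min (max c 0) (n : ℤ)) := xc_congr x (by omega)
    have h' : xc x (min (max c 0) (n : ℤ)) = xc x m := hcc.symm.trans hcx
    have := xc_inj hinj (by omega) (by omega) (by omega) hmn h'
    exact hc c hc1 hc2 (by simpa using hc3) this

lemma not_mem_Tset' {d n : ℕ} {x : Fin (n + 1) → V} (hinj : Function.Injective x)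
    {i m : ℤ} (h0 : 1 ≤ m) (hmn : m ≤ (n : ℤ))
    (hc : ∀ c : ℤ, i ≤ c → c ≤ i + (d : ℤ) - 1 → min (max c 0) (n : ℤ) ≠ m) :
    xc x m ∉ Tset d x i := by
  rintro ⟨c, ⟨hc1, hc2⟩, hcx⟩
  have hcc : xc x c = xc x (min (max c 0) (n : ℤ)) := xc_congr x (by omega)
  have h' : xc x (min (max c 0) (n : ℤ)) = xc x m := hcc.symm.trans hcx
  have := xc_inj hinj (by omega) (by omega) (by omega) hmn h'
  exact hc c hc1 hc2 this

lemma extremePoints_of_subset {s t : Set V} (hts : t ⊆ s) {p : V}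
    (hp : p ∈ s.extremePoints ℝ) (hpt : p ∈ t) : p ∈ t.extremePoints ℝ :=
  ⟨hpt, fun _ hx _ hy h => hp.2 (hts hx) (hts hy) h⟩

end AuxBrax


/-- In a `d`-braxtope, `[x_0, x_{t+1}, x_{t+k}]` is a 2-face for all
`0 ≤ t ≤ n - k` and `2 ≤ k ≤ d - 2`. -/
theorem braxtope_triangle_faces (d n : ℕ) (hd : 3 ≤ d) (hn : d ≤ n)
    (x : Fin (n + 1) → V) (hx : IsBraxtope d n x)
    (t k : ℤ) (ht0 : 0 ≤ t) (htn : t ≤ (n : ℤ) - k)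
    (hk2 : 2 ≤ k) (hkd : k ≤ (d : ℤ) - 2) :
    IsFaceOf (braxQ x) (convexHull ℝ {x 0, xc x (t + 1), xc x (t + k)}) ∧
      sdim (convexHull ℝ {x 0, xc x (t + 1), xc x (t + k)}) = 2 := by
  classical
  obtain ⟨hdn', hinj, hsd, hext, hfac⟩ := hx.2 hd
  have hd4 : (4 : ℤ) ≤ (d : ℤ) := by omega
  have hnd : (d : ℤ) ≤ (n : ℤ) := by exact_mod_cast hn
  have htkn : t + k ≤ (n : ℤ) := by omega
  have hb : xc x (t + 1) = x ⟨(t + 1).toNat, by omega⟩ := xc_eq x (by omega) (by omega)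
  have hc : xc x (t + k) = x ⟨(t + k).toNat, by omega⟩ := xc_eq x (by omega) (by omega)
  have hQconv : Convex ℝ (braxQ x) := convex_convexHull ℝ _
  have hQcomp : IsCompact (braxQ x) := (Set.finite_range x).isCompact_convexHull ℝ
  have hmemQ : ∀ p : V, p ∈ Set.range x → p ∈ braxQ x := fun p hp => subset_convexHull ℝ _ hp
  have hEface : ∀ j : ℤ, 2 ≤ j → j ≤ (n : ℤ) →
      IsExtreme ℝ (braxQ x) (convexHull ℝ (Eset d x j)) := fun j h2 hjn =>
    ((hfac _).mpr (Or.inr ⟨j, h2, hjn, rfl⟩)).1.1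
  have hTface : IsExtreme ℝ (braxQ x) (convexHull ℝ (Tset d x 0)) :=
    ((hfac _).mpr (Or.inl ⟨0, le_rfl, by omega, rfl⟩)).1.1
  set j1 : ℤ := min (t + (d : ℤ) - 1) (n : ℤ) with hj1
  set S : ℤ → Set V := fun m =>
    if m < max 2 (t + k + 2 - (d : ℤ)) then Eset d x j1
    else if m ≤ t + (d : ℤ) - 1 ∧ m ≤ (n : ℤ) - 1 then Eset d x m
    else if (d : ℤ) ≤ t + k then Eset d x (t + k + 2 - (d : ℤ)) else Tset d x 0
    with hS
  have key : ∀ m : ℤ, 1 ≤ m → m ≤ (n : ℤ) → m ≠ t + 1 → m ≠ t + k →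
      IsExtreme ℝ (braxQ x) (convexHull ℝ (S m)) ∧
        x 0 ∈ S m ∧ xc x (t + 1) ∈ S m ∧ xc x (t + k) ∈ S m ∧ xc x m ∉ S m := by
    intro m hm1 hmn hm2 hm3
    by_cases hb1 : m < max 2 (t + k + 2 - (d : ℤ))
    · simp only [hS, if_pos hb1]
      refine ⟨hEface j1 (by omega) (by omega), Set.mem_insert _ _,
        mem_Eset' x (by omega) (by omega) (by omega), ?_,
        not_mem_Eset' hinj hm1 hmn (fun c h1 h2 h3 => by omega)⟩
      rcases eq_or_ne j1 (t + k) with he | he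
      · have h5 : xc x (t + k) = xc x ((n : ℤ) + 1) := xc_congr x (by omega)
        rw [h5]
        exact mem_Eset' x (by omega) (by omega) (by omega)
      · exact mem_Eset' x (by omega) (by omega) (Ne.symm he)
    · by_cases hb2 : m ≤ t + (d : ℤ) - 1 ∧ m ≤ (n : ℤ) - 1
      · simp only [hS, if_neg hb1, if_pos hb2]
        exact ⟨hEface m (by omega) (by omega), Set.mem_insert _ _,
          mem_Eset' x (by omega) (by omega) (by omega),
          mem_Eset' x (by omega) (by omega) (by omega),
          not_mem_Eset' hinj hm1 hmn (fun c h1 h2 h3 => by omega)⟩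
      · by_cases hb3 : (d : ℤ) ≤ t + k
        · simp only [hS, if_neg hb1, if_neg hb2, if_pos hb3]
          exact ⟨hEface _ (by omega) (by omega), Set.mem_insert _ _,
            mem_Eset' x (by omega) (by omega) (by omega),
            mem_Eset' x (by omega) (by omega) (by omega),
            not_mem_Eset' hinj hm1 hmn (fun c h1 h2 h3 => by omega)⟩
        · simp only [hS, if_neg hb1, if_neg hb2, if_neg hb3]
          refine ⟨hTface, ?_, mem_Tset' x (by omega) (by omega),
            mem_Tset' x (by omega) (by omega),
            not_mem_Tset' hinj hm1 hmn (fun c h1 h2 => by omega)⟩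
          rw [← xc_zero x]
          exact mem_Tset' x le_rfl (by omega)
  have hTriQ : ({x 0, xc x (t + 1), xc x (t + k)} : Set V) ⊆ braxQ x := by
    rintro p (rfl | rfl | rfl)
    · exact hmemQ _ ⟨0, rfl⟩
    · exact hmemQ _ ⟨_, hb.symm⟩
    · exact hmemQ _ ⟨_, hc.symm⟩
  set M : Set ℤ := {m : ℤ | 1 ≤ m ∧ m ≤ (n : ℤ) ∧ m ≠ t + 1 ∧ m ≠ t + k} with hM
  set F : Set V := braxQ x ∩ ⋂ m ∈ M, convexHull ℝ (S m) with hF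
  have hFext : IsExtreme ℝ (braxQ x) F := by
    constructor
    · exact Set.inter_subset_left
    · intro x1 hx1 x2 hx2 p hp hseg
      have hmem := Set.mem_iInter₂.1 hp.2
      have h1 : ∀ m ∈ M, x1 ∈ convexHull ℝ (S m) ∧ x2 ∈ convexHull ℝ (S m) := fun m hm =>
        ⟨(key m hm.1 hm.2.1 hm.2.2.1 hm.2.2.2).1.2 hx1 hx2 (hmem m hm) hseg,
          (key m hm.1 hm.2.1 hm.2.2.1 hm.2.2.2).1.right_mem_of_mem_openSegment hx1 hx2 (hmem m hm) hseg⟩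
      exact ⟨hx1, Set.mem_iInter₂.2 fun m hm => (h1 m hm).1⟩
  have hSfin : ∀ m : ℤ, (S m).Finite := by
    intro m
    simp only [hS]
    split_ifs
    · exact (((Set.finite_Icc _ _).diff).image _).insert _
    · exact (((Set.finite_Icc _ _).diff).image _).insert _
    · exact (((Set.finite_Icc _ _).diff).image _).insert _
    · exact (Set.finite_Icc _ _).image _
  have hScl : ∀ m : ℤ, IsClosed (convexHull ℝ (S m)) := fun m =>
    ((hSfin m).isCompact_convexHull ℝ).isClosed
  have hFcl : IsClosed F := hQcomp.isClosed.inter (isClosed_biInter fun m _ => hScl m)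
  have hFcomp : IsCompact F := hQcomp.of_isClosed_subset hFcl Set.inter_subset_left
  have hFconv : Convex ℝ F := hQconv.inter (convex_iInter₂ fun m _ => convex_convexHull ℝ _)
  have hTriS : ∀ m ∈ M, ({x 0, xc x (t + 1), xc x (t + k)} : Set V) ⊆ S m := by
    intro m hm p hp
    obtain ⟨_, h0, h1, h2, _⟩ := key m hm.1 hm.2.1 hm.2.2.1 hm.2.2.2
    rcases hp with rfl | rfl | rfl
    exacts [h0, h1, h2]
  have hTriF : convexHull ℝ ({x 0, xc x (t + 1), xc x (t + k)} : Set V) ⊆ F :=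
    Set.subset_inter (convexHull_min hTriQ hQconv)
      (Set.subset_iInter₂ fun m hm => convexHull_mono (hTriS m hm))
  have hEP : F.extremePoints ℝ ⊆ ({x 0, xc x (t + 1), xc x (t + k)} : Set V) := by
    intro p hp
    have hpF : p ∈ F := hp.1
    have hpQ : p ∈ (braxQ x).extremePoints ℝ :=
      hFext.extremePoints_subset_extremePoints hp
    obtain ⟨i, rfl⟩ := extremePoints_convexHull_subset hpQ
    have hin : ((i : ℕ) : ℤ) ≤ (n : ℤ) := by exact_mod_cast Nat.le_of_lt_succ i.isLt
    have hxi : x i = xc x ((i : ℕ) : ℤ) := by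
      rw [xc_eq x (by omega) hin]
      exact congrArg x (Fin.ext (by simp))
    simp only [Set.mem_insert_iff, Set.mem_singleton_iff]
    rcases eq_or_ne ((i : ℕ) : ℤ) 0 with h0 | h0
    · exact Or.inl (by rw [hxi, h0, xc_zero])
    rcases eq_or_ne ((i : ℕ) : ℤ) (t + 1) with h1 | h1
    · exact Or.inr (Or.inl (by rw [hxi, h1]))
    rcases eq_or_ne ((i : ℕ) : ℤ) (t + k) with h2 | h2
    · exact Or.inr (Or.inr (by rw [hxi, h2]))
    exfalso
    have hiM : ((i : ℕ) : ℤ) ∈ M := ⟨by omega, hin, h1, h2⟩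
    obtain ⟨hex, _, _, _, hnot⟩ := key _ hiM.1 hiM.2.1 hiM.2.2.1 hiM.2.2.2
    have hpS : x i ∈ convexHull ℝ (S ((i : ℕ) : ℤ)) := Set.mem_iInter₂.1 hpF.2 _ hiM
    have hpe : x i ∈ (convexHull ℝ (S ((i : ℕ) : ℤ))).extremePoints ℝ :=
      extremePoints_of_subset hex.1 hpQ hpS
    have hmem2 := extremePoints_convexHull_subset hpe
    rw [hxi] at hmem2
    exact hnot hmem2
  have hTrifin : (({x 0, xc x (t + 1), xc x (t + k)} : Set V)).Finite :=
    ((Set.finite_singleton _).insert _).insert _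
  have hTricl : IsClosed (convexHull ℝ ({x 0, xc x (t + 1), xc x (t + k)} : Set V)) :=
    (hTrifin.isCompact_convexHull ℝ).isClosed
  have hFsub : F ⊆ convexHull ℝ ({x 0, xc x (t + 1), xc x (t + k)} : Set V) := by
    calc F = closure (convexHull ℝ (F.extremePoints ℝ)) :=
          (closure_convexHull_extremePoints hFcomp hFconv).symm
      _ ⊆ closure (convexHull ℝ ({x 0, xc x (t + 1), xc x (t + k)} : Set V)) :=
          closure_mono (convexHull_mono hEP)
      _ = convexHull ℝ ({x 0, xc x (t + 1), xc x (t + k)} : Set V) := hTricl.closure_eq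
  have hFeq : convexHull ℝ ({x 0, xc x (t + 1), xc x (t + k)} : Set V) = F :=
    hTriF.antisymm hFsub
  constructor
  · exact ⟨hFeq ▸ hFext, convex_convexHull ℝ _, hTricl⟩
  · have hne01 : x 0 ≠ xc x (t + 1) := by
      intro h
      have h' : xc x 0 = xc x (t + 1) := (xc_zero x).trans h
      have := xc_inj hinj le_rfl (by omega) (by omega) (by omega) h'
      omega
    have hne02 : x 0 ≠ xc x (t + k) := by
      intro h
      have h' : xc x 0 = xc x (t + k) := (xc_zero x).trans h
      have := xc_inj hinj le_rfl (by omega) (by omega) (by omega) h'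
      omega
    have hne12 : xc x (t + 1) ≠ xc x (t + k) := by
      intro h
      have := xc_inj hinj (by omega) (by omega) (by omega) (by omega) h
      omega
    have hexta : x 0 ∈ (braxQ x).extremePoints ℝ := hext 0
    have hextb : xc x (t + 1) ∈ (braxQ x).extremePoints ℝ := by rw [hb]; exact hext _
    have hextc : xc x (t + k) ∈ (braxQ x).extremePoints ℝ := by rw [hc]; exact hext _
    have haQ : x 0 ∈ braxQ x := hmemQ _ ⟨0, rfl⟩
    have hbQ : xc x (t + 1) ∈ braxQ x := hmemQ _ ⟨_, hb.symm⟩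
    have hcQ : xc x (t + k) ∈ braxQ x := hmemQ _ ⟨_, hc.symm⟩
    have hnc : ¬Collinear ℝ ({x 0, xc x (t + 1), xc x (t + k)} : Set V) := by
      intro hcol
      rcases hcol.wbtw_or_wbtw_or_wbtw with hw | hw | hw
      · exact hne01 (hextb.2 haQ hcQ (mem_openSegment_of_ne_left_right hne01
          (Ne.symm hne12) hw.mem_segment))
      · exact hne12 (hextc.2 hbQ haQ (mem_openSegment_of_ne_left_right hne12
          hne02 hw.mem_segment))
      · exact hne02 ((hexta.2 hcQ hbQ (mem_openSegment_of_ne_left_right (Ne.symm hne02)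
          (Ne.symm hne01) hw.mem_segment))).symm
    have hai : AffineIndependent ℝ ![x 0, xc x (t + 1), xc x (t + k)] :=
      affineIndependent_iff_not_collinear_set.2 hnc
    have hfr := hai.finrank_vectorSpan (show Fintype.card (Fin 3) = 2 + 1 by simp)
    have hrange : Set.range ![x 0, xc x (t + 1), xc x (t + k)] =
        ({x 0, xc x (t + 1), xc x (t + k)} : Set V) := by
      simp_rw [Matrix.range_cons, Matrix.range_empty, Set.singleton_union, insert_empty_eq]
    rw [hrange] at hfr
    have hnonempty : (convexHull ℝ ({x 0, xc x (t + 1), xc x (t + k)} : Set V)).Nonempty :=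
      ⟨x 0, subset_convexHull ℝ _ (Set.mem_insert _ _)⟩
    unfold sdim
    rw [if_pos hnonempty, affineSpan_convexHull, direction_affineSpan, hfr]
    norm_num
end
end
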